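/- Suppose F ⊆ ℝ^d tiles ℝ^d by an additive subgroup Γ of ℤ^d of finite index N, in the sense that for every y ∈ ℝ^d there is exactly one γ ∈ Γ with y − γ ∈ F. Then for every point s ∈ S_A, the fiber {(x, ω) ∈ F × Ω : 𝔡(x, ω) = s} has exactly N elements. -/

import Mathlib

/-!
The points of `𝕋^d` that `Ā` maps to `π y` are the `π ((Aᵀ)⁻¹ (y + m))`, `m ∈ ℤ^d`, and two of
them coincide iff the `m` agree modulo `Aᵀℤ^d`. So for `s ∈ S_A` and `π y = s n` there is exactly
one digit `v ∈ D` with `π (τ_v y) = s (n + 1)`: every lift `x` of `s 0` extends uniquely to a point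
`(x, ω)` of the fiber, and the fiber is in bijection with `F ∩ (x + ℤ^d)`. By the tiling property
`{k ∈ ℤ^d | x + k ∈ F}` is a complement of `Γ` in `ℤ^d`, so it has `[ℤ^d : Γ]` elements.
-/

open Matrix MeasureTheory Filter Topology

noncomputable section

/-- The integer lattice ℤ^d inside ℝ^d. -/
def intLattice (d : ℕ) : AddSubgroup (Fin d → ℝ) where
  carrier := {x | ∀ i, ∃ k : ℤ, x i = (k : ℝ)}
  zero_mem' := fun i => ⟨0, by simp⟩
  add_mem' := by
    intro x y hx hy i
    obtain ⟨a, ha⟩ := hx i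
    obtain ⟨b, hb⟩ := hy i
    exact ⟨a + b, by simp [ha, hb]⟩
  neg_mem' := by
    intro x hx i
    obtain ⟨a, ha⟩ := hx i
    exact ⟨-a, by simp [ha]⟩

/-- The torus ℝ^d / ℤ^d. -/
abbrev Torus (d : ℕ) := (Fin d → ℝ) ⧸ intLattice d

/-- The quotient homomorphism π : ℝ^d → 𝕋^d. -/
def torusMk (d : ℕ) : (Fin d → ℝ) →+ Torus d := QuotientAddGroup.mk' (intLattice d)

/-- A square integer matrix is expansive if all of its complex eigenvalues `μ`
satisfy `|μ| > 1`. -/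
def Expansive {d : ℕ} (A : Matrix (Fin d) (Fin d) ℤ) : Prop :=
  ∀ μ : ℂ, (Matrix.charpoly (A.map (Int.cast : ℤ → ℂ))).IsRoot μ → 1 < ‖μ‖

/-- The real matrix associated to an integer matrix. -/
def toR {d : ℕ} (A : Matrix (Fin d) (Fin d) ℤ) : Matrix (Fin d) (Fin d) ℝ :=
  A.map (Int.cast : ℤ → ℝ)

lemma latticeMap_aux {d : ℕ} (M : Matrix (Fin d) (Fin d) ℤ) :
    intLattice d ≤ (intLattice d).comap (toR M).mulVecLin.toAddMonoidHom := by
  intro x hx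
  choose k hk using hx
  intro i
  refine ⟨∑ j, M i j * k j, ?_⟩
  have : (toR M).mulVecLin.toAddMonoidHom x i = ∑ j, (M i j : ℝ) * (k j : ℝ) := by
    simp [toR, Matrix.mulVec, dotProduct, hk, Matrix.map_apply]
  rw [this]
  push_cast
  ring

/-- The endomorphism of the torus induced by an integer matrix. -/
def torusHom {d : ℕ} (M : Matrix (Fin d) (Fin d) ℤ) : Torus d →+ Torus d :=
  QuotientAddGroup.map _ _ (toR M).mulVecLin.toAddMonoidHom (latticeMap_aux M)

/-- The solenoid `S_A`, as an additive subgroup of `(𝕋^d)^ℕ`. -/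
def solenoid {d : ℕ} (A : Matrix (Fin d) (Fin d) ℤ) : AddSubgroup (ℕ → Torus d) where
  carrier := {z | ∀ n, torusHom Aᵀ (z (n + 1)) = z n}
  zero_mem' := by intro n; simp
  add_mem' := by
    intro a b ha hb n
    simp only [Pi.add_apply, map_add, ha n, hb n]
  neg_mem' := by
    intro a ha n
    simp only [Pi.neg_apply, map_neg, ha n]

/-- The shift automorphism σ_A of the solenoid (written on the ambient space). -/
def sigmaA {d : ℕ} (A : Matrix (Fin d) (Fin d) ℤ) (z : ℕ → Torus d) : ℕ → Torus d
  | 0 => torusHom Aᵀ (z 0)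
  | n + 1 => z n

/-- The embedding î : ℝ^d → S_A, î(x) = (π((Aᵀ)^{-n} x))ₙ. -/
def ihat {d : ℕ} (A : Matrix (Fin d) (Fin d) ℤ) (x : Fin d → ℝ) : ℕ → Torus d :=
  fun n => torusMk d ((((toR A)ᵀ)⁻¹ ^ n).mulVec x)

end

/-- D is a complete set of representatives of ℤ^d / Aᵀℤ^d. -/
def CompleteDigits {d : ℕ} (A : Matrix (Fin d) (Fin d) ℤ) (D : Set (Fin d → ℤ)) : Prop :=
  ∀ x : Fin d → ℤ, ∃! v : Fin d → ℤ, v ∈ D ∧ ∃ y : Fin d → ℤ, x - v = Aᵀ.mulVec y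

/-- The affine map τ_v(x) = (Aᵀ)⁻¹(x + v) for a digit v ∈ ℤ^d. -/
noncomputable def tauD {d : ℕ} (A : Matrix (Fin d) (Fin d) ℤ) (v : Fin d → ℤ)
    (x : Fin d → ℝ) : Fin d → ℝ :=
  (((toR A)ᵀ)⁻¹).mulVec (x + fun i => (v i : ℝ))

/-- The attractor X(Aᵀ, D) = { ∑_{j≥1} (Aᵀ)^{−j} d_j : d_j ∈ D }. -/
def attractor (d : ℕ) (A : Matrix (Fin d) (Fin d) ℤ) (D : Set (Fin d → ℤ)) :
    Set (Fin d → ℝ) :=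
  {x | ∃ dig : ℕ → Fin d → ℤ, (∀ j, dig j ∈ D) ∧
    HasSum (fun j : ℕ => ((((toR A)ᵀ)⁻¹) ^ (j + 1)).mulVec fun i => (dig j i : ℝ)) x}

/-- Iterated maps: tauWord ω n = τ_{ω_{n−1}} ∘ ⋯ ∘ τ_{ω_0} (identity for n = 0). -/
noncomputable def tauWord {d : ℕ} (A : Matrix (Fin d) (Fin d) ℤ)
    (ω : ℕ → Fin d → ℤ) : ℕ → (Fin d → ℝ) → Fin d → ℝ
  | 0 => fun x => x
  | n + 1 => fun x => tauD A (ω n) (tauWord A ω n x)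

/-- The decoding map 𝔡 : ℝ^d × Ω → S_A, 𝔡(x,ω)_n = π(τ_{ω_{n−1}}⋯τ_{ω_0} x). -/
noncomputable def codeMap {d : ℕ} (A : Matrix (Fin d) (Fin d) ℤ)
    (x : Fin d → ℝ) (ω : ℕ → Fin d → ℤ) : ℕ → Torus d :=
  fun n => torusMk d (tauWord A ω n x)

lemma AddSubgroup.isComplement_of_existsUnique_sub_mem {G : Type*} [AddCommGroup G]
    {H : AddSubgroup G} {T : Set G} (h : ∀ g, ∃! γ, γ ∈ H ∧ g - γ ∈ T) :
    AddSubgroup.IsComplement (H : Set G) T := by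
  rw [AddSubgroup.isComplement_iff_existsUnique_add_neg_mem]
  intro g
  obtain ⟨γ, ⟨hγH, hγT⟩, hγ⟩ := h g
  refine ⟨⟨g - γ, hγT⟩, by simpa using hγH, fun t ht => Subtype.ext ?_⟩
  change (t : G) = g - γ
  rw [← hγ (g + -t) ⟨ht, by simp⟩]
  abel

section Torus

variable {d : ℕ}

def castVec : (Fin d → ℤ) →+ (Fin d → ℝ) := (Int.castAddHom ℝ).compLeft (Fin d)

@[simp]
lemma castVec_apply (k : Fin d → ℤ) (i : Fin d) : castVec k i = (k i : ℝ) := rfl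

lemma castVec_injective : Function.Injective (castVec (d := d)) :=
  Int.cast_injective.comp_left

lemma toR_mulVec_castVec (M : Matrix (Fin d) (Fin d) ℤ) (k : Fin d → ℤ) :
    toR M *ᵥ castVec k = castVec (M *ᵥ k) := by
  funext i
  exact ((Int.castRingHom ℝ).map_mulVec M k i).symm

lemma toR_transpose (M : Matrix (Fin d) (Fin d) ℤ) : toR Mᵀ = (toR M)ᵀ := rfl

lemma isUnit_det_toR {M : Matrix (Fin d) (Fin d) ℤ} (hM : M.det ≠ 0) : IsUnit (toR M).det := by
  rw [toR, ← Int.cast_det]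
  exact isUnit_iff_ne_zero.mpr (Int.cast_ne_zero.mpr hM)

lemma Expansive.det_ne_zero {A : Matrix (Fin d) (Fin d) ℤ} (hA : Expansive A) : A.det ≠ 0 := by
  intro h
  have hroot : (A.map (Int.cast : ℤ → ℂ)).charpoly.IsRoot 0 := by
    have hdet := det_eq_sign_charpoly_coeff (A.map (Int.cast : ℤ → ℂ))
    rw [← Int.cast_det, h, Int.cast_zero, zero_eq_mul] at hdet
    simpa [Polynomial.IsRoot, Polynomial.coeff_zero_eq_eval_zero] using hdet
  exact absurd (hA 0 hroot) (by norm_num)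

lemma mem_intLattice_iff {x : Fin d → ℝ} : x ∈ intLattice d ↔ ∃ k, castVec k = x :=
  ⟨fun h => by choose k hk using h; exact ⟨k, funext fun i => (hk i).symm⟩,
    fun ⟨k, hk⟩ i => ⟨k i, by simp [← hk]⟩⟩

lemma torusMk_eq_iff {x y : Fin d → ℝ} :
    torusMk d x = torusMk d y ↔ ∃ k, castVec k = x - y := by
  rw [torusMk, QuotientAddGroup.mk'_apply, QuotientAddGroup.mk'_apply,
    QuotientAddGroup.eq_iff_sub_mem, mem_intLattice_iff]

lemma torusMk_add_castVec (x : Fin d → ℝ) (k : Fin d → ℤ) :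
    torusMk d (x + castVec k) = torusMk d x :=
  torusMk_eq_iff.mpr ⟨k, by abel⟩

lemma torusHom_torusMk (M : Matrix (Fin d) (Fin d) ℤ) (x : Fin d → ℝ) :
    torusHom M (torusMk d x) = torusMk d (toR M *ᵥ x) :=
  QuotientAddGroup.map_mk' _ _ _ _ _

end Torus

section Digits

variable {d : ℕ} {A : Matrix (Fin d) (Fin d) ℤ} {D : Set (Fin d → ℤ)}

lemma tauD_eq (A : Matrix (Fin d) (Fin d) ℤ) (v : Fin d → ℤ) (y : Fin d → ℝ) :
    tauD A v y = ((toR A)ᵀ)⁻¹ *ᵥ (y + castVec v) := rfl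

lemma isUnit_det_toR_transpose (hA : A.det ≠ 0) : IsUnit ((toR A)ᵀ).det := by
  rw [← toR_transpose]
  exact isUnit_det_toR (by rwa [det_transpose])

lemma torusHom_torusMk_tauD (hA : A.det ≠ 0) (v : Fin d → ℤ) (y : Fin d → ℝ) :
    torusHom Aᵀ (torusMk d (tauD A v y)) = torusMk d y := by
  rw [torusHom_torusMk, toR_transpose, tauD_eq, mulVec_mulVec,
    mul_nonsing_inv _ (isUnit_det_toR_transpose hA), one_mulVec, torusMk_add_castVec]

lemma torusMk_tauD_eq_iff (hA : A.det ≠ 0) {y z : Fin d → ℝ} {m : Fin d → ℤ}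
    (hm : castVec m = (toR A)ᵀ *ᵥ z - y) (v : Fin d → ℤ) :
    torusMk d (tauD A v y) = torusMk d z ↔ ∃ k, m - v = Aᵀ *ᵥ k := by
  have hB := isUnit_det_toR_transpose hA
  have hinj := mulVec_injective_iff_isUnit.mpr ((isUnit_iff_isUnit_det _).mpr hB)
  have hmul : (toR A)ᵀ *ᵥ (tauD A v y - z) = castVec (v - m) := by
    rw [tauD_eq, mulVec_sub, mulVec_mulVec, mul_nonsing_inv _ hB, one_mulVec, map_sub, hm]
    abel
  have hk : ∀ k, castVec k = tauD A v y - z ↔ Aᵀ *ᵥ k = v - m := fun k => by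
    rw [← hinj.eq_iff, hmul, ← toR_transpose, toR_mulVec_castVec, castVec_injective.eq_iff]
  simp_rw [torusMk_eq_iff, hk]
  exact ⟨fun ⟨k, hk⟩ => ⟨-k, by rw [mulVec_neg, hk, neg_sub]⟩,
    fun ⟨k, hk⟩ => ⟨-k, by rw [mulVec_neg, ← hk, neg_sub]⟩⟩

lemma existsUnique_digit_torusMk_tauD (hA : A.det ≠ 0) (hD : CompleteDigits A D)
    {y : Fin d → ℝ} {u : Torus d} (hu : torusHom Aᵀ u = torusMk d y) :
    ∃! v, v ∈ D ∧ torusMk d (tauD A v y) = u := by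
  obtain ⟨z, rfl⟩ : ∃ z, torusMk d z = u := QuotientAddGroup.mk'_surjective _ u
  obtain ⟨m, hm⟩ := torusMk_eq_iff.mp ((torusHom_torusMk Aᵀ z).symm.trans hu)
  rw [toR_transpose] at hm
  simp_rw [torusMk_tauD_eq_iff hA hm]
  exact hD m

end Digits

section Coding

variable {d : ℕ} {A : Matrix (Fin d) (Fin d) ℤ} {D : Set (Fin d → ℤ)}

lemma exists_digits_codeMap_eq (hA : A.det ≠ 0) (hD : CompleteDigits A D)
    {s : ℕ → Torus d} (hs : s ∈ solenoid A) {x : Fin d → ℝ} (hx : torusMk d x = s 0) :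
    ∃ ω, (∀ n, ω n ∈ D) ∧ codeMap A x ω = s := by
  have hstep : ∀ n (y : {y // torusMk d y = s n}),
      ∃ v ∈ D, torusMk d (tauD A v y) = s (n + 1) :=
    fun n y => (existsUnique_digit_torusMk_tauD hA hD ((hs n).trans y.2.symm)).exists
  choose v hvD hv using hstep
  let lift : ∀ n, {y // torusMk d y = s n} :=
    fun n => Nat.rec ⟨x, hx⟩ (fun n y => ⟨tauD A (v n y) y, hv n y⟩) n
  have hword : ∀ n, tauWord A (fun n => v n (lift n)) n x = (lift n).1 := by
    intro n
    induction n with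
    | zero => rfl
    | succ n ih => exact congrArg (tauD A _) ih
  exact ⟨fun n => v n (lift n), fun n => hvD n _,
    funext fun n => (congrArg (torusMk d) (hword n)).trans (lift n).2⟩

lemma digits_eq_of_codeMap_eq (hA : A.det ≠ 0) (hD : CompleteDigits A D)
    {x : Fin d → ℝ} {ω ω' : ℕ → Fin d → ℤ} (hω : ∀ n, ω n ∈ D) (hω' : ∀ n, ω' n ∈ D)
    (h : codeMap A x ω = codeMap A x ω') : ω = ω' := by
  have hdigit : ∀ n, tauWord A ω n x = tauWord A ω' n x → ω n = ω' n := by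
    intro n hn
    have hnext : torusMk d (tauD A (ω' n) (tauWord A ω n x)) =
        torusMk d (tauD A (ω n) (tauWord A ω n x)) := by
      nth_rewrite 1 [hn]
      exact (congrFun h (n + 1)).symm
    exact (existsUnique_digit_torusMk_tauD hA hD (torusHom_torusMk_tauD hA (ω n) _)).unique
      ⟨hω n, rfl⟩ ⟨hω' n, hnext⟩
  have hword : ∀ n, tauWord A ω n x = tauWord A ω' n x := by
    intro n
    induction n with
    | zero => rfl
    | succ n ih =>
      change tauD A (ω n) _ = tauD A (ω' n) _
      rw [ih, hdigit n ih]
  exact funext fun n => hdigit n (hword n)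

lemma card_codeMap_fiber (hA : A.det ≠ 0) (hD : CompleteDigits A D)
    {s : ℕ → Torus d} (hs : s ∈ solenoid A) (F : Set (Fin d → ℝ)) :
    Nat.card {q : (Fin d → ℝ) × (ℕ → Fin d → ℤ) //
      q.1 ∈ F ∧ (∀ n, q.2 n ∈ D) ∧ codeMap A q.1 q.2 = s} =
    Nat.card {x // x ∈ F ∧ torusMk d x = s 0} := by
  refine Nat.card_eq_of_bijective (fun q => ⟨q.1.1, q.2.1, congrFun q.2.2.2 0⟩) ⟨?_, ?_⟩
  · rintro ⟨⟨x, ω⟩, _, hωD, hω⟩ ⟨⟨x', ω'⟩, _, hω'D, hω'⟩ hxx'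
    obtain rfl : x = x' := congrArg Subtype.val hxx'
    exact Subtype.ext (Prod.ext rfl (digits_eq_of_codeMap_eq hA hD hωD hω'D (hω.trans hω'.symm)))
  · rintro ⟨x, hxF, hx⟩
    obtain ⟨ω, hωD, hω⟩ := exists_digits_codeMap_eq hA hD hs hx
    exact ⟨⟨(x, ω), hxF, hωD, hω⟩, rfl⟩

end Coding

lemma card_torusMk_fiber_of_tiles {d : ℕ} (Γ : AddSubgroup (Fin d → ℤ)) (F : Set (Fin d → ℝ))
    (htile : ∀ y : Fin d → ℝ, ∃! γ : Fin d → ℤ, γ ∈ Γ ∧ (y - fun i => (γ i : ℝ)) ∈ F)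
    (x₀ : Fin d → ℝ) :
    Nat.card {x // x ∈ F ∧ torusMk d x = torusMk d x₀} = Γ.index := by
  set T : Set (Fin d → ℤ) := {k | x₀ + castVec k ∈ F}
  have hshift : ∀ g γ : Fin d → ℤ, (x₀ + castVec g - fun i => (γ i : ℝ)) = x₀ + castVec (g - γ) :=
    fun g γ => by rw [map_sub, add_sub_assoc]; rfl
  have hT : AddSubgroup.IsComplement (Γ : Set (Fin d → ℤ)) T :=
    AddSubgroup.isComplement_of_existsUnique_sub_mem fun g => by
      have hg := htile (x₀ + castVec g)
      simp only [hshift] at hg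
      exact hg
  have himage : {x | x ∈ F ∧ torusMk d x = torusMk d x₀} = (x₀ + castVec ·) '' T := by
    ext x
    simp only [Set.mem_ofPred_eq, Set.mem_image, torusMk_eq_iff]
    constructor
    · rintro ⟨hxF, k, hk⟩
      exact ⟨k, show x₀ + castVec k ∈ F by rwa [hk, add_sub_cancel], by rw [hk, add_sub_cancel]⟩
    · rintro ⟨k, hkT, rfl⟩
      exact ⟨hkT, k, by abel⟩
  change Nat.card {x | x ∈ F ∧ torusMk d x = torusMk d x₀} = _
  rw [himage, Nat.card_image_of_injective fun _ _ h => castVec_injective (add_left_cancel h),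
    hT.card_right]

theorem statement11_general (d : ℕ) (A : Matrix (Fin d) (Fin d) ℤ)
    (hA : Expansive A) (D : Set (Fin d → ℤ)) (hD : CompleteDigits A D)
    (Γ : AddSubgroup (Fin d → ℤ)) (N : ℕ) (hN : Γ.index = N)
    (F : Set (Fin d → ℝ))
    (htile : ∀ y : Fin d → ℝ, ∃! γ : Fin d → ℤ, γ ∈ Γ ∧
      (y - fun i => (γ i : ℝ)) ∈ F)
    (s : ℕ → Torus d) (hs : s ∈ solenoid A) :
    Nat.card {q : (Fin d → ℝ) × (ℕ → Fin d → ℤ) //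
      q.1 ∈ F ∧ (∀ n, q.2 n ∈ D) ∧ codeMap A q.1 q.2 = s} = N := by
  obtain ⟨x₀, hx₀⟩ : ∃ x₀, torusMk d x₀ = s 0 := QuotientAddGroup.mk'_surjective _ _
  rw [card_codeMap_fiber hA.det_ne_zero hD hs F, ← hx₀, card_torusMk_fiber_of_tiles Γ F htile, hN]

/-- if F tiles ℝ^d by a subgroup Γ ⊆ ℤ^d of finite index N, then
every fiber of 𝔡 restricted to F × Ω over a point of the solenoid has exactly
N elements. -/
theorem statement11 (d : ℕ) (hd : 0 < d) (A : Matrix (Fin d) (Fin d) ℤ)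
    (hA : Expansive A) (D : Set (Fin d → ℤ)) (hD : CompleteDigits A D)
    (Γ : AddSubgroup (Fin d → ℤ)) (N : ℕ) (hNpos : 0 < N) (hN : Γ.index = N)
    (F : Set (Fin d → ℝ))
    (htile : ∀ y : Fin d → ℝ, ∃! γ : Fin d → ℤ, γ ∈ Γ ∧
      (y - fun i => (γ i : ℝ)) ∈ F)
    (s : ℕ → Torus d) (hs : s ∈ solenoid A) :
    Nat.card {q : (Fin d → ℝ) × (ℕ → Fin d → ℤ) //
      q.1 ∈ F ∧ (∀ n, q.2 n ∈ D) ∧ codeMap A q.1 q.2 = s} = N :=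
  statement11_general d A hA D hD Γ N hN F htile s hs
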